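/- For any bounded square-summable sequence a: ℤ → ℝ and Δx > 0, the discrete Gagliardo–Nirenberg-type inequality holds: ‖D₊(a)‖_{ℓ⁴_Δ} ≤ √(3 ‖a‖_{ℓ^∞} ‖D₊D₋(a)‖_{ℓ²_Δ}), where ‖b‖_{ℓ⁴_Δ} = (Δx ∑_j b_j⁴)^{1/4}. -/
import Mathlib

noncomputable section
def Dp (Δx : ℝ) (a : ℤ → ℝ) : ℤ → ℝ := fun j => (a (j + 1) - a j) / Δx
def D2 (Δx : ℝ) (a : ℤ → ℝ) : ℤ → ℝ := fun j => (a (j + 1) - 2 * a j + a (j - 1)) / Δx ^ 2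
def l2norm (Δx : ℝ) (a : ℤ → ℝ) : ℝ := Real.sqrt (Δx * ∑' j : ℤ, (a j) ^ 2)
def l4norm (Δx : ℝ) (a : ℤ → ℝ) : ℝ := (Δx * ∑' j : ℤ, (a j) ^ 4) ^ ((1 : ℝ) / 4)
def linfnorm (a : ℤ → ℝ) : ℝ := ⨆ j : ℤ, |a j|

/-- Cauchy–Schwarz for tsums over ℤ. -/
lemma tsum_abs_mul_le (f g : ℤ → ℝ) (hf : Summable fun j => f j ^ 2)
    (hg : Summable fun j => g j ^ 2) :
    (∑' j, |f j * g j|) ≤ Real.sqrt (∑' j, f j ^ 2) * Real.sqrt (∑' j, g j ^ 2) := by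
  have hfg : Summable fun j => |f j * g j| := by
    apply Summable.of_nonneg_of_le (fun j => abs_nonneg _) (fun j => ?_)
      (((hf.add hg).div_const 2))
    rw [abs_mul]
    nlinarith [sq_nonneg (|f j| - |g j|), sq_abs (f j), sq_abs (g j)]
  refine Summable.tsum_le_of_sum_le hfg fun s => ?_
  have h1 : (∑ i ∈ s, |f i * g i|) ^ 2 ≤ (∑ i ∈ s, f i ^ 2) * ∑ i ∈ s, g i ^ 2 := by
    have := Finset.sum_mul_sq_le_sq_mul_sq s (fun i => |f i|) (fun i => |g i|)
    simpa [abs_mul, sq_abs] using this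
  have h2 : (∑ i ∈ s, f i ^ 2) ≤ ∑' j, f j ^ 2 :=
    Summable.sum_le_tsum s (fun i _ => sq_nonneg _) hf
  have h3 : (∑ i ∈ s, g i ^ 2) ≤ ∑' j, g j ^ 2 :=
    Summable.sum_le_tsum s (fun i _ => sq_nonneg _) hg
  have hsum : 0 ≤ ∑ i ∈ s, |f i * g i| := Finset.sum_nonneg fun i _ => abs_nonneg _
  have : (∑ i ∈ s, |f i * g i|) ^ 2 ≤ (∑' j, f j ^ 2) * ∑' j, g j ^ 2 := by
    refine h1.trans (mul_le_mul h2 h3 (Finset.sum_nonneg fun i _ => sq_nonneg _) ?_)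
    exact le_trans (Finset.sum_nonneg fun i _ => sq_nonneg _) h2
  calc (∑ i ∈ s, |f i * g i|) = Real.sqrt ((∑ i ∈ s, |f i * g i|) ^ 2) :=
        (Real.sqrt_sq hsum).symm
    _ ≤ Real.sqrt ((∑' j, f j ^ 2) * ∑' j, g j ^ 2) := Real.sqrt_le_sqrt this
    _ = Real.sqrt (∑' j, f j ^ 2) * Real.sqrt (∑' j, g j ^ 2) := Real.sqrt_mul
        (tsum_nonneg fun j => sq_nonneg _) _

lemma abs_cube_sub_cube (x y : ℝ) : |x ^ 3 - y ^ 3| ≤ |x - y| * ((3:ℝ)/2 * (x ^ 2 + y ^ 2)) := by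
  have h : x ^ 3 - y ^ 3 = (x - y) * (x ^ 2 + x * y + y ^ 2) := by ring
  rw [h, abs_mul]
  apply mul_le_mul_of_nonneg_left ?_ (abs_nonneg _)
  rw [abs_le]
  constructor <;> nlinarith [sq_nonneg (x + y), sq_nonneg (x - y)]

set_option maxHeartbeats 3000000 in
/-- Discrete Gagliardo–Nirenberg inequality:
`‖D₊(a)‖_{ℓ⁴_Δ} ≤ √(3‖a‖_{ℓ^∞}‖D₊D₋(a)‖_{ℓ²_Δ})`. -/
theorem stmt16 (Δx : ℝ) (hΔx : 0 < Δx) (a : ℤ → ℝ)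
    (ha : Summable fun j : ℤ => (a j) ^ 2)
    (hbdd : BddAbove (Set.range fun j : ℤ => |a j|)) :
    l4norm Δx (Dp Δx a) ≤ Real.sqrt (3 * linfnorm a * l2norm Δx (D2 Δx a)) := by
  set b := Dp Δx a with hb_def
  set d := D2 Δx a with hd_def
  set M := linfnorm a with hM_def
  have hMj : ∀ j, |a j| ≤ M := fun j => le_ciSup hbdd j
  have hM0 : 0 ≤ M := (abs_nonneg (a 0)).trans (hMj 0)
  -- shifted summability of a²
  have haP : Summable fun j : ℤ => a (j + 1) ^ 2 :=
    ((Equiv.addRight (1:ℤ)).summable_iff).2 ha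
  have haM : Summable fun j : ℤ => a (j - 1) ^ 2 :=
    ((Equiv.subRight (1:ℤ)).summable_iff).2 ha
  -- b is square-summable
  have hb2 : Summable fun j => b j ^ 2 := by
    apply Summable.of_nonneg_of_le (fun j => sq_nonneg _) (fun j => ?_)
      (((haP.mul_left 2).add (ha.mul_left 2)).div_const (Δx ^ 2))
    have : b j ^ 2 = (a (j + 1) - a j) ^ 2 / Δx ^ 2 := by
      rw [hb_def]; simp [Dp, div_pow]
    rw [this]
    apply div_le_div_of_nonneg_right ?_ (by positivity)
    · nlinarith [sq_nonneg (a (j + 1) + a j)]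
  have hb2M : Summable fun j => b (j - 1) ^ 2 :=
    ((Equiv.subRight (1:ℤ)).summable_iff).2 hb2
  -- b is bounded
  have hbabs : ∀ j, |b j| ≤ 2 * M / Δx := by
    intro j
    rw [hb_def]
    simp only [Dp]
    rw [abs_div, abs_of_pos hΔx]
    apply div_le_div_of_nonneg_right ?_ hΔx.le
    calc |a (j + 1) - a j| ≤ |a (j + 1)| + |a j| := abs_sub _ _
      _ ≤ M + M := add_le_add (hMj _) (hMj _)
      _ = 2 * M := by ring
  -- b⁴ is summable
  have hb4 : Summable fun j => b j ^ 4 := by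
    apply Summable.of_nonneg_of_le (fun j => by positivity) (fun j => ?_)
      (hb2.mul_left ((2 * M / Δx) ^ 2))
    have h1 : b j ^ 2 ≤ (2 * M / Δx) ^ 2 := by
      rw [← sq_abs]
      apply pow_le_pow_left₀ (abs_nonneg _) (hbabs j)
    nlinarith [sq_nonneg (b j)]
  have hb4M : Summable fun j => b (j - 1) ^ 4 :=
    ((Equiv.subRight (1:ℤ)).summable_iff).2 hb4
  -- relation b j - b (j-1) = Δx * d j
  have hbd : ∀ j : ℤ, b j - b (j - 1) = Δx * d j := by
    intro j
    rw [hb_def, hd_def]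
    simp only [Dp, D2]
    have : j - 1 + 1 = j := by ring
    rw [this]
    field_simp
    ring
  -- d² is summable
  have hd2 : Summable fun j => d j ^ 2 := by
    apply Summable.of_nonneg_of_le (fun j => sq_nonneg _) (fun j => ?_)
      (((hb2.mul_left 2).add (hb2M.mul_left 2)).div_const (Δx ^ 2))
    have hd : d j = (b j - b (j - 1)) / Δx := by
      rw [eq_div_iff hΔx.ne']
      linarith [hbd j]
    rw [hd, div_pow]
    apply div_le_div_of_nonneg_right ?_ (by positivity)
    nlinarith [sq_nonneg (b j + b (j - 1))]
  set S := ∑' j, b j ^ 4 with hS_def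
  set T := ∑' j, d j ^ 2 with hT_def
  have hS0 : 0 ≤ S := tsum_nonneg fun j => by positivity
  have hT0 : 0 ≤ T := tsum_nonneg fun j => sq_nonneg _
  -- summability of b³·a terms
  have habs3 : ∀ (c : ℤ → ℝ), (∀ j, |c j| ≤ M) → Summable fun j => b j ^ 3 * c j := by
    intro c hc
    apply Summable.of_abs
    apply Summable.of_nonneg_of_le (fun j => abs_nonneg _) (fun j => ?_)
      (hb2.mul_left (2 * M / Δx * M))
    rw [abs_mul]
    have h1 : |b j ^ 3| = |b j| * b j ^ 2 := by
      rw [← sq_abs]; rw [abs_pow] ; ring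
    rw [h1]
    have h2 : |b j| * b j ^ 2 * |c j| ≤ (2 * M / Δx) * b j ^ 2 * M := by
      apply mul_le_mul (mul_le_mul_of_nonneg_right (hbabs j) (sq_nonneg _)) (hc j)
        (abs_nonneg _)
      positivity
    linarith
  have h1 : Summable fun j => b j ^ 3 * a (j + 1) := by
    refine habs3 (fun j => a (j + 1)) (fun j => hMj _)
  have h2 : Summable fun j => b j ^ 3 * a j := habs3 a hMj
  have h1' : Summable fun j => b (j - 1) ^ 3 * a j := by
    have h := ((Equiv.subRight (1:ℤ)).summable_iff).2 h1
    refine h.congr fun j => ?_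
    have e : j - 1 + 1 = j := by ring
    simp only [Function.comp, Equiv.subRight_apply, e]
  -- telescoping identity
  have hshift : (∑' j, b j ^ 3 * a (j + 1)) = ∑' j, b (j - 1) ^ 3 * a j := by
    have := (Equiv.addRight (1:ℤ)).tsum_eq (fun j => b (j - 1) ^ 3 * a j)
    simp only [Equiv.coe_addRight, add_sub_cancel_right] at this
    exact this
  have hkey : Δx * S = ∑' j, (b (j - 1) ^ 3 - b j ^ 3) * a j := by
    have e1 : Δx * S = ∑' j, b j ^ 3 * (a (j + 1) - a j) := by
      rw [hS_def, ← tsum_mul_left]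
      apply tsum_congr
      intro j
      have : a (j + 1) - a j = Δx * b j := by
        rw [hb_def]; simp only [Dp]; field_simp
      rw [this]; ring
    have e2 : (∑' j, b j ^ 3 * (a (j + 1) - a j))
        = (∑' j, b j ^ 3 * a (j + 1)) - ∑' j, b j ^ 3 * a j := by
      rw [← Summable.tsum_sub h1 h2]
      apply tsum_congr; intro j; ring
    rw [e1, e2, hshift, ← Summable.tsum_sub h1' h2]
    apply tsum_congr; intro j; ring
  -- bound the telescoped sum
  have hdb2 : Summable fun j => |d j| * b j ^ 2 := by
    apply Summable.of_nonneg_of_le (fun j => by positivity) (fun j => ?_)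
      ((hd2.add hb4).div_const 2)
    nlinarith [sq_nonneg (|d j| - b j ^ 2), sq_abs (d j), sq_nonneg (b j ^ 2), abs_nonneg (d j)]
  have hdb2' : Summable fun j => |d j| * b (j - 1) ^ 2 := by
    apply Summable.of_nonneg_of_le (fun j => by positivity) (fun j => ?_)
      ((hd2.add hb4M).div_const 2)
    nlinarith [sq_nonneg (|d j| - b (j - 1) ^ 2), sq_abs (d j)]
  have hbound : Δx * S ≤ (3/2) * M * Δx * ((∑' j, |d j| * b j ^ 2) + ∑' j, |d j| * b (j - 1) ^ 2) := by
    rw [hkey]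
    have hsummand : ∀ j : ℤ, (b (j - 1) ^ 3 - b j ^ 3) * a j
        ≤ (3/2) * M * Δx * (|d j| * b j ^ 2 + |d j| * b (j - 1) ^ 2) := by
      intro j
      calc (b (j - 1) ^ 3 - b j ^ 3) * a j ≤ |(b (j - 1) ^ 3 - b j ^ 3) * a j| := le_abs_self _
        _ = |b (j - 1) ^ 3 - b j ^ 3| * |a j| := abs_mul _ _
        _ ≤ (|b (j - 1) - b j| * ((3:ℝ)/2 * (b (j - 1) ^ 2 + b j ^ 2))) * M := by
            apply mul_le_mul (abs_cube_sub_cube _ _) (hMj j) (abs_nonneg _)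
            positivity
        _ = (|b j - b (j - 1)| * ((3:ℝ)/2 * (b (j - 1) ^ 2 + b j ^ 2))) * M := by
            rw [abs_sub_comm]
        _ = (3/2) * M * Δx * (|d j| * b j ^ 2 + |d j| * b (j - 1) ^ 2) := by
            rw [hbd j, abs_mul, abs_of_pos hΔx]
            ring
    have hsum : Summable fun j => (3/2) * M * Δx * (|d j| * b j ^ 2 + |d j| * b (j - 1) ^ 2) :=
      (hdb2.add hdb2').mul_left _
    calc (∑' j, (b (j - 1) ^ 3 - b j ^ 3) * a j)
        ≤ ∑' j, (3/2) * M * Δx * (|d j| * b j ^ 2 + |d j| * b (j - 1) ^ 2) := by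
          apply Summable.tsum_le_tsum hsummand ((h1'.sub (habs3 a hMj)).congr ?_) hsum
          · intro j; ring
      _ = (3/2) * M * Δx * ((∑' j, |d j| * b j ^ 2) + ∑' j, |d j| * b (j - 1) ^ 2) := by
          rw [tsum_mul_left, Summable.tsum_add hdb2 hdb2']
  -- Cauchy-Schwarz on each piece
  have hcs1 : (∑' j, |d j| * b j ^ 2) ≤ Real.sqrt T * Real.sqrt S := by
    have := tsum_abs_mul_le d (fun j => b j ^ 2) hd2 (by simpa [← pow_mul] using hb4)
    have heq : (∑' j, |d j * b j ^ 2|) = ∑' j, |d j| * b j ^ 2 := by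
      apply tsum_congr; intro j
      rw [abs_mul, abs_of_nonneg (sq_nonneg (b j))]
    rw [heq] at this
    refine this.trans_eq ?_
    congr 1
    · rw [hS_def]
      congr 1
      apply tsum_congr; intro j; ring
  have hSshift : (∑' j, b (j - 1) ^ 4) = S := by
    rw [hS_def]
    exact ((Equiv.subRight (1:ℤ)).tsum_eq (fun j => b j ^ 4))
  have hcs2 : (∑' j, |d j| * b (j - 1) ^ 2) ≤ Real.sqrt T * Real.sqrt S := by
    have := tsum_abs_mul_le d (fun j => b (j - 1) ^ 2) hd2 (by simpa [← pow_mul] using hb4M)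
    have heq : (∑' j, |d j * b (j - 1) ^ 2|) = ∑' j, |d j| * b (j - 1) ^ 2 := by
      apply tsum_congr; intro j
      rw [abs_mul, abs_of_nonneg (sq_nonneg (b (j - 1)))]
    rw [heq] at this
    refine this.trans_eq ?_
    congr 1
    rw [← hSshift]
    congr 1
    apply tsum_congr; intro j; ring
  -- conclude S ≤ 3 M √T √S
  have hfinal : S ≤ 3 * M * (Real.sqrt T * Real.sqrt S) := by
    have hstep : (3/2) * M * Δx * ((∑' j, |d j| * b j ^ 2) + ∑' j, |d j| * b (j - 1) ^ 2)
        ≤ Δx * (3 * M * (Real.sqrt T * Real.sqrt S)) := by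
      calc (3/2) * M * Δx * ((∑' j, |d j| * b j ^ 2) + ∑' j, |d j| * b (j - 1) ^ 2)
          ≤ (3/2) * M * Δx * (Real.sqrt T * Real.sqrt S + Real.sqrt T * Real.sqrt S) := by
            apply mul_le_mul_of_nonneg_left (add_le_add hcs1 hcs2) (by positivity)
        _ = Δx * (3 * M * (Real.sqrt T * Real.sqrt S)) := by ring
    exact le_of_mul_le_mul_left (hbound.trans hstep) hΔx
  have hsqrtS : Real.sqrt S ≤ 3 * M * Real.sqrt T := by
    rcases eq_or_lt_of_le (Real.sqrt_nonneg S) with h | h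
    · rw [← h]; positivity
    · have hSS : Real.sqrt S * Real.sqrt S = S := Real.mul_self_sqrt hS0
      have : Real.sqrt S * Real.sqrt S ≤ (3 * M * Real.sqrt T) * Real.sqrt S := by
        rw [hSS]; linarith [hfinal]
      exact le_of_mul_le_mul_right this h
  -- translate to the goal
  have hST : Δx * S ≤ 9 * M ^ 2 * (Δx * T) := by
    have := mul_le_mul hsqrtS hsqrtS (Real.sqrt_nonneg S) (by positivity)
    rw [Real.mul_self_sqrt hS0] at this
    have hTT : Real.sqrt T * Real.sqrt T = T := Real.mul_self_sqrt hT0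
    have hS9 : S ≤ 9 * M ^ 2 * T := by nlinarith [this, hTT]
    calc Δx * S ≤ Δx * (9 * M ^ 2 * T) := mul_le_mul_of_nonneg_left hS9 hΔx.le
      _ = 9 * M ^ 2 * (Δx * T) := by ring
  have hL0 : (0:ℝ) ≤ Δx * S := by positivity
  have hR0 : (0:ℝ) ≤ 3 * M * l2norm Δx d := by
    have : 0 ≤ l2norm Δx d := Real.sqrt_nonneg _
    positivity
  rw [l4norm]
  apply le_of_pow_le_pow_left₀ (n := 4) (by norm_num) (Real.sqrt_nonneg _)
  have hLHS : ((Δx * ∑' j, b j ^ 4) ^ ((1:ℝ)/4)) ^ (4:ℕ) = Δx * S := by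
    rw [← Real.rpow_natCast (((Δx * ∑' j, b j ^ 4)) ^ ((1:ℝ)/4)) 4,
      ← Real.rpow_mul hL0]
    norm_num
  rw [hLHS]
  have hRHS : (Real.sqrt (3 * M * l2norm Δx d)) ^ (4:ℕ)
      = (3 * M * l2norm Δx d) ^ 2 := by
    rw [show (4:ℕ) = 2 * 2 by norm_num, pow_mul, Real.sq_sqrt hR0]
  rw [hRHS]
  have hl2 : l2norm Δx d ^ 2 = Δx * T := by
    rw [l2norm, Real.sq_sqrt (by positivity)]
  calc Δx * S ≤ 9 * M ^ 2 * (Δx * T) := hST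
    _ = (3 * M) ^ 2 * l2norm Δx d ^ 2 := by rw [hl2]; ring
    _ = (3 * M * l2norm Δx d) ^ 2 := by ring
end
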